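/- Let q,p be smooth functions of monodromy coordinates (s₁,s₂) (at fixed t) and suppose ω = Σ_j (2/3)(p q_{s_j} - (1/2) q p_{s_j} - 2t q_{s_j}(tq + 2q³) + (t/2) p p_{s_j}) ds_j + H_S(q,p,t)dt with the t-flow q_t = p/2, p_t = 2tq + 4q³. Then the exterior derivative of ω in the (s₁,s₂) variables equals (p_{s₁} q_{s₂} - p_{s₂} q_{s₁}) ds₁ ∧ ds₂, the canonical symplectic form, and is independent of t. -/

import Mathlib

noncomputable def pd (v : ℝ × ℝ × ℝ) (F : ℝ × ℝ × ℝ → ℝ) (x : ℝ × ℝ × ℝ) : ℝ :=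
  fderiv ℝ F x v

lemma pd_contDiff {F : ℝ × ℝ × ℝ → ℝ} (hF : ContDiff ℝ (⊤ : ℕ∞) F) (v : ℝ × ℝ × ℝ) :
    ContDiff ℝ (⊤ : ℕ∞) (pd v F) :=
  (hF.fderiv_right (by simp)).clm_apply contDiff_const

lemma hasDerivAt_line1 {F : ℝ × ℝ × ℝ → ℝ} (hF : Differentiable ℝ F) (t s₁ s₂ : ℝ) :
    HasDerivAt (fun τ => F (τ, s₁, s₂)) (pd (1, 0, 0) F (t, s₁, s₂)) t :=
  (hF (t, s₁, s₂)).hasFDerivAt.comp_hasDerivAt t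
    (HasDerivAt.prodMk (hasDerivAt_id t) (HasDerivAt.prodMk (hasDerivAt_const t s₁) (hasDerivAt_const t s₂)))

lemma hasDerivAt_line2 {F : ℝ × ℝ × ℝ → ℝ} (hF : Differentiable ℝ F) (t s₁ s₂ : ℝ) :
    HasDerivAt (fun x => F (t, x, s₂)) (pd (0, 1, 0) F (t, s₁, s₂)) s₁ :=
  (hF (t, s₁, s₂)).hasFDerivAt.comp_hasDerivAt s₁
    (HasDerivAt.prodMk (hasDerivAt_const s₁ t) (HasDerivAt.prodMk (hasDerivAt_id s₁) (hasDerivAt_const s₁ s₂)))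

lemma hasDerivAt_line3 {F : ℝ × ℝ × ℝ → ℝ} (hF : Differentiable ℝ F) (t s₁ s₂ : ℝ) :
    HasDerivAt (fun y => F (t, s₁, y)) (pd (0, 0, 1) F (t, s₁, s₂)) s₂ :=
  (hF (t, s₁, s₂)).hasFDerivAt.comp_hasDerivAt s₂
    (HasDerivAt.prodMk (hasDerivAt_const s₂ t) (HasDerivAt.prodMk (hasDerivAt_const s₂ s₁) (hasDerivAt_id s₂)))

lemma pd_comm {F : ℝ × ℝ × ℝ → ℝ} (hF : ContDiff ℝ (⊤ : ℕ∞) F) (v w x : ℝ × ℝ × ℝ) :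
    pd w (pd v F) x = pd v (pd w F) x := by
  have hd : ∀ y, HasFDerivAt F (fderiv ℝ F y) y :=
    fun y => (hF.differentiable (by simp) y).hasFDerivAt
  have h2 : DifferentiableAt ℝ (fderiv ℝ F) x :=
    ((hF.fderiv_right (m := (⊤ : ℕ∞)) (by simp)).differentiable (by simp)) x
  have hsymm := second_derivative_symmetric hd h2.hasFDerivAt w v
  have e : ∀ u : ℝ × ℝ × ℝ, ∀ z : ℝ × ℝ × ℝ,
      pd z (pd u F) x = (fderiv ℝ (fderiv ℝ F) x) z u := by
    intro u z
    have h : fderiv ℝ (fun y => (fderiv ℝ F y) u) x =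
        (fderiv ℝ F x).comp (fderiv ℝ (fun _ : ℝ × ℝ × ℝ => u) x) +
          (fderiv ℝ (fderiv ℝ F) x).flip u :=
      fderiv_clm_apply h2 (differentiableAt_const u)
    show (fderiv ℝ (fun y => (fderiv ℝ F y) u) x) z = _
    rw [h]
    simp
  rw [e v w, e w v, hsymm]

lemma pd_congr {F G : ℝ × ℝ × ℝ → ℝ} (h : ∀ x, F x = G x) (v x : ℝ × ℝ × ℝ) :
    pd v F x = pd v G x := by
  have hFG : F = G := funext h
  simp [pd, hFG]



/-- The `ds₁`-coefficient of the extended one-form `ω_ext` at fixed `t,s₂`: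
`(2/3)(p q_{s₁} - (1/2)q p_{s₁} - 2t(tq+2q³)q_{s₁} + (t/2)p p_{s₁})`. -/
noncomputable def omegaCoeff1 (q p : ℝ → ℝ → ℝ → ℝ) (t s₁ s₂ : ℝ) : ℝ :=
  (2 / 3) * (p t s₁ s₂ * deriv (fun x => q t x s₂) s₁
    - (1 / 2) * q t s₁ s₂ * deriv (fun x => p t x s₂) s₁
    - 2 * t * (t * q t s₁ s₂ + 2 * (q t s₁ s₂) ^ 3) * deriv (fun x => q t x s₂) s₁
    + (t / 2) * p t s₁ s₂ * deriv (fun x => p t x s₂) s₁)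

/-- The `ds₂`-coefficient of the extended one-form `ω_ext` at fixed `t,s₁`. -/
noncomputable def omegaCoeff2 (q p : ℝ → ℝ → ℝ → ℝ) (t s₁ s₂ : ℝ) : ℝ :=
  (2 / 3) * (p t s₁ s₂ * deriv (fun y => q t s₁ y) s₂
    - (1 / 2) * q t s₁ s₂ * deriv (fun y => p t s₁ y) s₂
    - 2 * t * (t * q t s₁ s₂ + 2 * (q t s₁ s₂) ^ 3) * deriv (fun y => q t s₁ y) s₂
    + (t / 2) * p t s₁ s₂ * deriv (fun y => p t s₁ y) s₂)

lemma main_aux (Q P : ℝ × ℝ × ℝ → ℝ)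
    (hq : ContDiff ℝ (⊤ : ℕ∞) Q) (hp : ContDiff ℝ (⊤ : ℕ∞) P)
    (hqt : ∀ t s₁ s₂ : ℝ, HasDerivAt (fun τ => Q (τ, s₁, s₂)) (P (t, s₁, s₂) / 2) t)
    (hpt : ∀ t s₁ s₂ : ℝ, HasDerivAt (fun τ => P (τ, s₁, s₂))
      (2 * t * Q (t, s₁, s₂) + 4 * (Q (t, s₁, s₂)) ^ 3) t) :
    (∀ t s₁ s₂ : ℝ,
      deriv (fun x => omegaCoeff2 (fun a b c => Q (a,b,c)) (fun a b c => P (a,b,c)) t x s₂) s₁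
        - deriv (fun y => omegaCoeff1 (fun a b c => Q (a,b,c)) (fun a b c => P (a,b,c)) t s₁ y) s₂
        = deriv (fun x => P (t,x,s₂)) s₁ * deriv (fun y => Q (t,s₁,y)) s₂
          - deriv (fun y => P (t,s₁,y)) s₂ * deriv (fun x => Q (t,x,s₂)) s₁) ∧
    (∀ t s₁ s₂ : ℝ,
      deriv (fun τ => deriv (fun x => P (τ,x,s₂)) s₁ * deriv (fun y => Q (τ,s₁,y)) s₂
        - deriv (fun y => P (τ,s₁,y)) s₂ * deriv (fun x => Q (τ,x,s₂)) s₁) t = 0) := by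
  have hQd : Differentiable ℝ Q := hq.differentiable (by simp)
  have hPd : Differentiable ℝ P := hp.differentiable (by simp)
  have hQ2 : Differentiable ℝ (pd (0,1,0) Q) := (pd_contDiff hq _).differentiable (by simp)
  have hQ3 : Differentiable ℝ (pd (0,0,1) Q) := (pd_contDiff hq _).differentiable (by simp)
  have hP2 : Differentiable ℝ (pd (0,1,0) P) := (pd_contDiff hp _).differentiable (by simp)
  have hP3 : Differentiable ℝ (pd (0,0,1) P) := (pd_contDiff hp _).differentiable (by simp)
  constructor
  · intro t s₁ s₂
    have e2 : ∀ x : ℝ, omegaCoeff2 (fun a b c => Q (a,b,c)) (fun a b c => P (a,b,c)) t x s₂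
        = (2/3) * (P (t,x,s₂) * pd (0,0,1) Q (t,x,s₂)
          - (1/2) * Q (t,x,s₂) * pd (0,0,1) P (t,x,s₂)
          - 2*t*(t*Q (t,x,s₂) + 2*(Q (t,x,s₂))^3) * pd (0,0,1) Q (t,x,s₂)
          + (t/2) * P (t,x,s₂) * pd (0,0,1) P (t,x,s₂)) := by
      intro x
      simp only [omegaCoeff2]
      rw [(hasDerivAt_line3 hQd t x s₂).deriv, (hasDerivAt_line3 hPd t x s₂).deriv]
    have e1 : ∀ y : ℝ, omegaCoeff1 (fun a b c => Q (a,b,c)) (fun a b c => P (a,b,c)) t s₁ y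
        = (2/3) * (P (t,s₁,y) * pd (0,1,0) Q (t,s₁,y)
          - (1/2) * Q (t,s₁,y) * pd (0,1,0) P (t,s₁,y)
          - 2*t*(t*Q (t,s₁,y) + 2*(Q (t,s₁,y))^3) * pd (0,1,0) Q (t,s₁,y)
          + (t/2) * P (t,s₁,y) * pd (0,1,0) P (t,s₁,y)) := by
      intro y
      simp only [omegaCoeff1]
      rw [(hasDerivAt_line2 hQd t s₁ y).deriv, (hasDerivAt_line2 hPd t s₁ y).deriv]
    have hq2 := hasDerivAt_line2 hQd t s₁ s₂
    have hp2 := hasDerivAt_line2 hPd t s₁ s₂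
    have hq3 := hasDerivAt_line3 hQd t s₁ s₂
    have hp3 := hasDerivAt_line3 hPd t s₁ s₂
    have hq32 := hasDerivAt_line2 hQ3 t s₁ s₂
    have hp32 := hasDerivAt_line2 hP3 t s₁ s₂
    have hq23 := hasDerivAt_line3 hQ2 t s₁ s₂
    have hp23 := hasDerivAt_line3 hP2 t s₁ s₂
    have H2 := (((((hp2.mul hq32).sub ((hq2.const_mul ((1:ℝ)/2)).mul hp32)).sub
        ((((hq2.const_mul t).add ((hq2.pow 3).const_mul 2)).const_mul (2*t)).mul hq32)).add
        ((hp2.const_mul (t/2)).mul hp32)).const_mul ((2:ℝ)/3)).congr_of_eventuallyEq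
        (Filter.Eventually.of_forall e2)
    have H1 := (((((hp3.mul hq23).sub ((hq3.const_mul ((1:ℝ)/2)).mul hp23)).sub
        ((((hq3.const_mul t).add ((hq3.pow 3).const_mul 2)).const_mul (2*t)).mul hq23)).add
        ((hp3.const_mul (t/2)).mul hp23)).const_mul ((2:ℝ)/3)).congr_of_eventuallyEq
        (Filter.Eventually.of_forall e1)
    rw [H2.deriv, H1.deriv, hp2.deriv, hq3.deriv, hp3.deriv, hq2.deriv,
      pd_comm hq (0,0,1) (0,1,0) (t,s₁,s₂), pd_comm hp (0,0,1) (0,1,0) (t,s₁,s₂)]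
    simp only [Pi.add_apply, Pi.pow_apply]
    push_cast
    ring
  · intro t s₁ s₂
    have eτ : ∀ τ : ℝ, (deriv (fun x => P (τ,x,s₂)) s₁ * deriv (fun y => Q (τ,s₁,y)) s₂
        - deriv (fun y => P (τ,s₁,y)) s₂ * deriv (fun x => Q (τ,x,s₂)) s₁)
        = pd (0,1,0) P (τ,s₁,s₂) * pd (0,0,1) Q (τ,s₁,s₂)
          - pd (0,0,1) P (τ,s₁,s₂) * pd (0,1,0) Q (τ,s₁,s₂) := by
      intro τ
      rw [(hasDerivAt_line2 hPd τ s₁ s₂).deriv, (hasDerivAt_line3 hQd τ s₁ s₂).deriv,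
        (hasDerivAt_line3 hPd τ s₁ s₂).deriv, (hasDerivAt_line2 hQd τ s₁ s₂).deriv]
    have hA := hasDerivAt_line1 hP2 t s₁ s₂
    have hB := hasDerivAt_line1 hQ3 t s₁ s₂
    have hC := hasDerivAt_line1 hP3 t s₁ s₂
    have hD := hasDerivAt_line1 hQ2 t s₁ s₂
    have H := ((hA.mul hB).sub (hC.mul hD)).congr_of_eventuallyEq
      (Filter.Eventually.of_forall eτ)
    have hP1 : ∀ x : ℝ × ℝ × ℝ, pd (1,0,0) P x = 2 * x.1 * Q x + 4 * (Q x) ^ 3 := by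
      rintro ⟨a, b, c⟩
      exact (hasDerivAt_line1 hPd a b c).unique (hpt a b c)
    have hQ1 : ∀ x : ℝ × ℝ × ℝ, pd (1,0,0) Q x = P x / 2 := by
      rintro ⟨a, b, c⟩
      exact (hasDerivAt_line1 hQd a b c).unique (hqt a b c)
    have hGc : ContDiff ℝ (⊤ : ℕ∞) (fun x : ℝ × ℝ × ℝ => 2 * x.1 * Q x + 4 * (Q x) ^ 3) :=
      ((contDiff_const.mul contDiff_fst).mul hq).add (contDiff_const.mul (hq.pow 3))
    have hHc : ContDiff ℝ (⊤ : ℕ∞) (fun x : ℝ × ℝ × ℝ => P x / 2) := hp.div_const 2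
    have hq2 := hasDerivAt_line2 hQd t s₁ s₂
    have hq3 := hasDerivAt_line3 hQd t s₁ s₂
    have hp2 := hasDerivAt_line2 hPd t s₁ s₂
    have hp3 := hasDerivAt_line3 hPd t s₁ s₂
    have eP12 := (hasDerivAt_line2 (hGc.differentiable (by simp)) t s₁ s₂).unique
      ((hq2.const_mul (2*t)).add ((hq2.pow 3).const_mul 4))
    have eP13 := (hasDerivAt_line3 (hGc.differentiable (by simp)) t s₁ s₂).unique
      ((hq3.const_mul (2*t)).add ((hq3.pow 3).const_mul 4))
    have eQ12 := (hasDerivAt_line2 (hHc.differentiable (by simp)) t s₁ s₂).unique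
      (hp2.div_const 2)
    have eQ13 := (hasDerivAt_line3 (hHc.differentiable (by simp)) t s₁ s₂).unique
      (hp3.div_const 2)
    rw [H.deriv, pd_comm hp (0,1,0) (1,0,0) (t,s₁,s₂), pd_comm hq (0,0,1) (1,0,0) (t,s₁,s₂),
      pd_comm hp (0,0,1) (1,0,0) (t,s₁,s₂), pd_comm hq (0,1,0) (1,0,0) (t,s₁,s₂),
      pd_congr hP1 (0,1,0) (t,s₁,s₂), pd_congr hQ1 (0,0,1) (t,s₁,s₂),
      pd_congr hP1 (0,0,1) (t,s₁,s₂), pd_congr hQ1 (0,1,0) (t,s₁,s₂),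
      eP12, eP13, eQ12, eQ13]
    push_cast
    ring

/-- the exterior derivative of `ω_ext` in the monodromy variables `(s₁,s₂)`,
i.e. `∂_{s₁}ω₂ - ∂_{s₂}ω₁`, equals the canonical symplectic form coefficient
`p_{s₁}q_{s₂} - p_{s₂}q_{s₁}`, and this coefficient is independent of `t` along the
Painlevé II flow `q_t = p/2`, `p_t = 2tq + 4q³`. -/
theorem exterior_derivative_is_symplectic_form
    (q p : ℝ → ℝ → ℝ → ℝ)
    (hq : ContDiff ℝ (⊤ : ℕ∞) (fun x : ℝ × ℝ × ℝ => q x.1 x.2.1 x.2.2))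
    (hp : ContDiff ℝ (⊤ : ℕ∞) (fun x : ℝ × ℝ × ℝ => p x.1 x.2.1 x.2.2))
    (hqt : ∀ t s₁ s₂ : ℝ, HasDerivAt (fun τ => q τ s₁ s₂) (p t s₁ s₂ / 2) t)
    (hpt : ∀ t s₁ s₂ : ℝ, HasDerivAt (fun τ => p τ s₁ s₂)
      (2 * t * q t s₁ s₂ + 4 * (q t s₁ s₂) ^ 3) t) :
    (∀ t s₁ s₂ : ℝ,
      deriv (fun x => omegaCoeff2 q p t x s₂) s₁ - deriv (fun y => omegaCoeff1 q p t s₁ y) s₂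
        = deriv (fun x => p t x s₂) s₁ * deriv (fun y => q t s₁ y) s₂
          - deriv (fun y => p t s₁ y) s₂ * deriv (fun x => q t x s₂) s₁) ∧
    (∀ t s₁ s₂ : ℝ,
      deriv (fun τ => deriv (fun x => p τ x s₂) s₁ * deriv (fun y => q τ s₁ y) s₂
        - deriv (fun y => p τ s₁ y) s₂ * deriv (fun x => q τ x s₂) s₁) t = 0) := by
  exact main_aux (fun x => q x.1 x.2.1 x.2.2) (fun x => p x.1 x.2.1 x.2.2) hq hp
    (fun t s₁ s₂ => hqt t s₁ s₂) (fun t s₁ s₂ => hpt t s₁ s₂)
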